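/- arXiv:0710.1184 — 2 statements merged into one kernel-verified Lean document; each statement's English description precedes it below -/
import Mathlib

section
/- For all real α, β with 5β/4 ≥ α + 1/2, the Hilbert–Schmidt distance between ρ_{α,β,0} and the state σ̃_{α,β} := ρ_{(−2+20α+5β)/24, (2+4α+β)/6, 0} equals ‖σ̃_{α,β} − ρ_{α,β,0}‖ = (√2/3)·(5β/4 − α − 1/2). -/
open Matrix Complex
open scoped Matrix Kronecker ComplexOrder

noncomputable section

/-- A density matrix: Hermitian, positive semidefinite, trace 1. -/
def IsDensityMatrix {n : Type*} [Fintype n] [DecidableEq n] (ρ : Matrix n n ℂ) : Prop :=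
  ρ.IsHermitian ∧ ρ.PosSemidef ∧ ρ.trace = 1

/-- A separable state on ℂ^d ⊗ ℂ^d : a finite convex combination of Kronecker
products of density matrices. -/
def IsSepState {d : ℕ} (ρ : Matrix (Fin d × Fin d) (Fin d × Fin d) ℂ) : Prop :=
  ∃ (K : ℕ) (p : Fin K → ℝ) (ρ₁ ρ₂ : Fin K → Matrix (Fin d) (Fin d) ℂ),
    (∀ k, 0 ≤ p k) ∧ (∑ k, p k = 1) ∧
    (∀ k, IsDensityMatrix (ρ₁ k)) ∧ (∀ k, IsDensityMatrix (ρ₂ k)) ∧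
    ρ = ∑ k, (p k : ℂ) • (ρ₁ k ⊗ₖ ρ₂ k)

/-- Hilbert–Schmidt inner product ⟨A,B⟩ = Tr(A†B). -/
def hsInner {n : Type*} [Fintype n] (A B : Matrix n n ℂ) : ℂ := (Aᴴ * B).trace

/-- Hilbert–Schmidt (Frobenius) norm ‖A‖ = √Tr(A†A). -/
def hsNorm {n : Type*} [Fintype n] (A : Matrix n n ℂ) : ℝ :=
  Real.sqrt ((Aᴴ * A).trace.re)

/-- The Weyl operator U_{nm} on ℂ^d: (U_{nm})_{k,l} = exp(2πi k n / d) if l = (k+m) mod d. -/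
def weyl (d : ℕ) (n m : Fin d) : Matrix (Fin d) (Fin d) ℂ :=
  Matrix.of fun k l =>
    if l = k + m then Complex.exp (2 * Real.pi * Complex.I * k.val * n.val / d) else 0

/-- The maximally entangled two-qutrit vector |φ⁺₃⟩. -/
def phiPlus3 : (Fin 3 × Fin 3) → ℂ :=
  fun p => if p.1 = p.2 then ((1 / Real.sqrt 3 : ℝ) : ℂ) else 0

/-- The projector |φ⁺₃⟩⟨φ⁺₃|. -/
def projPhiPlus3 : Matrix (Fin 3 × Fin 3) (Fin 3 × Fin 3) ℂ :=
  vecMulVec phiPlus3 (star phiPlus3)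

/-- The two-qutrit Bell projectors P_{nm}. -/
def bellP (n m : Fin 3) : Matrix (Fin 3 × Fin 3) (Fin 3 × Fin 3) ℂ :=
  (weyl 3 n m ⊗ₖ (1 : Matrix (Fin 3) (Fin 3) ℂ)) * projPhiPlus3 *
    (weyl 3 n m ⊗ₖ (1 : Matrix (Fin 3) (Fin 3) ℂ))ᴴ

/-- The three-parameter family of two-qutrit states ρ_{α,β,γ}. -/
def rhoFam (α β γ : ℝ) : Matrix (Fin 3 × Fin 3) (Fin 3 × Fin 3) ℂ :=
  (((1 - α - β - γ) / 9 : ℝ) : ℂ) • (1 : Matrix (Fin 3 × Fin 3) (Fin 3 × Fin 3) ℂ) +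
    (α : ℂ) • bellP 0 0 + ((β / 2 : ℝ) : ℂ) • (bellP 1 0 + bellP 2 0) +
    ((γ / 3 : ℝ) : ℂ) • (bellP 0 1 + bellP 1 1 + bellP 2 1)

/-- The operator U₁. -/
def opU1 : Matrix (Fin 3 × Fin 3) (Fin 3 × Fin 3) ℂ :=
  weyl 3 0 1 ⊗ₖ weyl 3 0 1 + weyl 3 0 2 ⊗ₖ weyl 3 0 2 + weyl 3 1 1 ⊗ₖ weyl 3 2 1 +
    weyl 3 1 2 ⊗ₖ weyl 3 2 2 + weyl 3 2 1 ⊗ₖ weyl 3 1 1 + weyl 3 2 2 ⊗ₖ weyl 3 1 2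

/-- The operator U₂ᴵ. -/
def opU2I : Matrix (Fin 3 × Fin 3) (Fin 3 × Fin 3) ℂ := weyl 3 1 0 ⊗ₖ weyl 3 2 0

/-- The operator U₂ᴵᴵ. -/
def opU2II : Matrix (Fin 3 × Fin 3) (Fin 3 × Fin 3) ℂ := weyl 3 2 0 ⊗ₖ weyl 3 1 0

/-- The operator U₂ = U₂ᴵ + U₂ᴵᴵ. -/
def opU2 : Matrix (Fin 3 × Fin 3) (Fin 3 × Fin 3) ℂ := opU2I + opU2II

/-- σ₊ = (1/3)(|01⟩⟨01| + |12⟩⟨12| + |20⟩⟨20|). -/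
def sigmaPlus : Matrix (Fin 3 × Fin 3) (Fin 3 × Fin 3) ℂ :=
  (1 / 3 : ℂ) • Matrix.diagonal (fun p => if p.2 = p.1 + 1 then 1 else 0)

/-- σ₋ = (1/3)(|10⟩⟨10| + |21⟩⟨21| + |02⟩⟨02|). -/
def sigmaMinus : Matrix (Fin 3 × Fin 3) (Fin 3 × Fin 3) ℂ :=
  (1 / 3 : ℂ) • Matrix.diagonal (fun p => if p.1 = p.2 + 1 then 1 else 0)

/-- The Horodecki states ρ_b. -/
def horodecki (b : ℝ) : Matrix (Fin 3 × Fin 3) (Fin 3 × Fin 3) ℂ :=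
  (2 / 7 : ℂ) • projPhiPlus3 + ((b / 7 : ℝ) : ℂ) • sigmaPlus +
    (((5 - b) / 7 : ℝ) : ℂ) • sigmaMinus

/-- Partial transpose in the second subsystem. -/
def ptB (ρ : Matrix (Fin 3 × Fin 3) (Fin 3 × Fin 3) ℂ) :
    Matrix (Fin 3 × Fin 3) (Fin 3 × Fin 3) ℂ :=
  Matrix.of fun p q => ρ (p.1, q.2) (q.1, p.2)

def ω3 : ℂ := Complex.exp (2 * Real.pi * Complex.I / 3)

lemma ω3_prim : IsPrimitiveRoot ω3 3 := Complex.isPrimitiveRoot_exp 3 (by norm_num)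
lemma ω3_pow3 : ω3 ^ 3 = 1 := ω3_prim.pow_eq_one
lemma ω3_sum : 1 + ω3 + ω3 ^ 2 = 0 := by
  have := ω3_prim.geom_sum_eq_zero (by norm_num)
  simpa [Finset.sum_range_succ] using this
lemma ω3_ne_zero : ω3 ≠ 0 := Complex.exp_ne_zero _
lemma star_ω3 : star ω3 = ω3 ^ 2 := by
  have h1 : ω3 * star ω3 = 1 := by
    rw [ω3, Complex.star_def, ← Complex.exp_conj, ← Complex.exp_add]
    rw [show (2 * (Real.pi:ℂ) * Complex.I / 3) + (starRingEnd ℂ) (2 * (Real.pi:ℂ) * Complex.I / 3) = 0 by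
      simp [map_div₀, _root_.map_mul, Complex.conj_I, map_ofNat]; ring]
    exact Complex.exp_zero
  have h2 : ω3 * ω3 ^ 2 = 1 := by rw [← pow_succ']; exact ω3_pow3
  exact mul_left_cancel₀ ω3_ne_zero (h1.trans h2.symm)

lemma weyl_n0 (n : Fin 3) :
    weyl 3 n 0 = Matrix.diagonal (fun k : Fin 3 => ω3 ^ (k.val * n.val)) := by
  ext k l
  simp only [weyl, Matrix.of_apply, add_zero, Matrix.diagonal_apply]
  rcases eq_or_ne k l with rfl | h
  · rw [if_pos rfl, if_pos rfl,
      show (2 * (Real.pi:ℂ) * Complex.I * k.val * n.val / ((3:ℕ):ℂ)) =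
        ((k.val * n.val : ℕ) : ℂ) * (2 * Real.pi * Complex.I / 3) by push_cast; ring,
      Complex.exp_nat_mul]
    rfl
  · rw [if_neg h, if_neg (Ne.symm h)]




lemma proj_apply (p q : Fin 3 × Fin 3) :
    projPhiPlus3 p q = if p.1 = p.2 ∧ q.1 = q.2 then (1/3 : ℂ) else 0 := by
  have h : (((Real.sqrt 3 : ℝ) : ℂ))⁻¹ * (((Real.sqrt 3 : ℝ) : ℂ))⁻¹ = (3:ℂ)⁻¹ := by
    rw [← mul_inv, ← Complex.ofReal_mul, Real.mul_self_sqrt (by norm_num)]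
    norm_num
  simp only [projPhiPlus3, vecMulVec_apply, phiPlus3, Pi.star_apply, star_zero,
    Complex.star_def, Complex.conj_ofReal]
  by_cases h1 : p.1 = p.2 <;> by_cases h2 : q.1 = q.2 <;> simp [h1, h2, h]

lemma bellP_n0 (n : Fin 3) (p q : Fin 3 × Fin 3) :
    bellP n 0 p q = ω3 ^ (p.1.val * n.val) * projPhiPlus3 p q * star (ω3 ^ (q.1.val * n.val)) := by
  have hk : weyl 3 n 0 ⊗ₖ (1 : Matrix (Fin 3) (Fin 3) ℂ)
      = Matrix.diagonal (fun r : Fin 3 × Fin 3 => ω3 ^ (r.1.val * n.val)) := by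
    rw [weyl_n0, ← Matrix.diagonal_one, Matrix.diagonal_kronecker_diagonal]
    simp
  rw [bellP, hk, Matrix.diagonal_conjTranspose]
  simp [Matrix.diagonal_mul, Matrix.mul_diagonal, mul_comm, mul_assoc, mul_left_comm]

lemma key (j k : Fin 3) :
    ω3 ^ j.val * star (ω3 ^ k.val) + ω3 ^ (j.val * 2) * star (ω3 ^ (k.val * 2))
      = if j = k then 2 else -1 := by
  have h3 := ω3_pow3
  have hs := ω3_sum
  have h4 : ω3 ^ 4 = ω3 := by rw [pow_succ, h3, one_mul]
  have h5 : ω3 ^ 5 = ω3 ^ 2 := by rw [show (5:ℕ) = 3 + 2 by rfl, pow_add, h3, one_mul]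
  have h6 : ω3 ^ 6 = 1 := by rw [show (6:ℕ) = 3 + 3 by rfl, pow_add, h3, one_mul]
  have h8 : ω3 ^ 8 = ω3 ^ 2 := by rw [show (8:ℕ) = 6 + 2 by rfl, pow_add, h6, one_mul]
  have h7 : ω3 ^ 7 = ω3 := by rw [show (7:ℕ) = 6 + 1 by rfl, pow_add, h6, one_mul, pow_one]
  have h9 : ω3 ^ 9 = 1 := by rw [show (9:ℕ) = 6 + 3 by rfl, pow_add, h6, one_mul, h3]
  have h10 : ω3 ^ 10 = ω3 := by rw [show (10:ℕ) = 9 + 1 by rfl, pow_add, h9, one_mul, pow_one]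
  have h11 : ω3 ^ 11 = ω3 ^ 2 := by rw [show (11:ℕ) = 9 + 2 by rfl, pow_add, h9, one_mul]
  have h12 : ω3 ^ 12 = 1 := by rw [show (12:ℕ) = 9 + 3 by rfl, pow_add, h9, one_mul, h3]
  fin_cases j <;> fin_cases k <;>
    simp only [star_pow, star_ω3, ← pow_mul, Fin.mk_zero, Fin.mk_one, Fin.isValue] <;>
    norm_num [Fin.ext_iff] <;>
    (try ring_nf) <;>
    (try simp only [h3, h4, h5, h6, h7, h8, h9, h10, h11, h12]) <;>
    first | linear_combination hs | linear_combination -hs | linear_combination 2 * hs | linear_combination -2 * hs | ring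



def dEnt (a : ℝ) (p q : Fin 3 × Fin 3) : ℝ :=
  if p = q then (if p.1 = p.2 then -2*a/3 else a/3)
  else if p.1 = p.2 ∧ q.1 = q.2 then a else 0

lemma bell00 : bellP 0 0 = projPhiPlus3 := by
  ext p q
  rw [bellP_n0]; simp

lemma bellSum : bellP 1 0 + bellP 2 0
    = Matrix.of fun p q =>
        if p.1 = p.2 ∧ q.1 = q.2 then (if p.1 = q.1 then (2/3:ℂ) else -(1/3)) else 0 := by
  ext p q
  have hk := key p.1 q.1
  simp only [Matrix.add_apply, bellP_n0, proj_apply, Matrix.of_apply,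
    show ((1:Fin 3)).val = 1 from rfl, show ((2:Fin 3)).val = 2 from rfl, mul_one]
  by_cases hb : p.1 = p.2 ∧ q.1 = q.2
  · simp only [if_pos hb]
    by_cases he : p.1 = q.1
    · rw [if_pos he] at hk; rw [if_pos he]; linear_combination (1/3 : ℂ) * hk
    · rw [if_neg he] at hk; rw [if_neg he]; linear_combination (1/3 : ℂ) * hk
  · simp only [if_neg hb]; ring

lemma diff_apply (α β : ℝ) (p q : Fin 3 × Fin 3) :
    (rhoFam ((-2 + 20 * α + 5 * β) / 24) ((2 + 4 * α + β) / 6) 0 - rhoFam α β 0) p q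
      = ((dEnt ((5*β - 4*α - 2)/24) p q : ℝ) : ℂ) := by
  rw [rhoFam, rhoFam, bell00, bellSum]
  obtain ⟨p1, p2⟩ := p
  obtain ⟨q1, q2⟩ := q
  simp only [Matrix.sub_apply, Matrix.add_apply, Matrix.smul_apply, smul_eq_mul,
    proj_apply, Matrix.of_apply, Matrix.one_apply, dEnt]
  split_ifs <;>
    first
      | (push_cast; ring1)
      | (exfalso; aesop)

lemma trace_D (a : ℝ) :
    ((Matrix.of fun p q => ((dEnt a p q : ℝ) : ℂ))ᴴ *
      (Matrix.of fun p q => ((dEnt a p q : ℝ) : ℂ))).trace = ((8*a^2 : ℝ) : ℂ) := by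
  simp only [Matrix.trace, Matrix.diag, Matrix.mul_apply, Matrix.conjTranspose_apply,
    Matrix.of_apply, Complex.star_def, Complex.conj_ofReal, Fintype.sum_prod_type,
    Fin.sum_univ_three]
  norm_num [dEnt, Prod.ext_iff, Fin.ext_iff]
  ring

/-- Hilbert–Schmidt distance to the nearest separable state in region II. -/
theorem stmt10 (α β : ℝ) (h : α + 1 / 2 ≤ 5 * β / 4) :
    hsNorm (rhoFam ((-2 + 20 * α + 5 * β) / 24) ((2 + 4 * α + β) / 6) 0 - rhoFam α β 0)
      = Real.sqrt 2 / 3 * (5 * β / 4 - α - 1 / 2) := by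
  have hd : rhoFam ((-2 + 20 * α + 5 * β) / 24) ((2 + 4 * α + β) / 6) 0 - rhoFam α β 0
      = Matrix.of fun p q => ((dEnt ((5*β - 4*α - 2)/24) p q : ℝ) : ℂ) := by
    ext p q
    exact diff_apply α β p q
  rw [hd]
  simp only [hsNorm]
  rw [trace_D, Complex.ofReal_re]
  have ha : (0:ℝ) ≤ (5*β - 4*α - 2)/24 := by linarith
  rw [show (8*((5*β - 4*α - 2)/24)^2 : ℝ) = (2*Real.sqrt 2*((5*β - 4*α - 2)/24))^2 by
    rw [mul_pow, mul_pow, Real.sq_sqrt (by norm_num)]; ring]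
  rw [Real.sqrt_sq (by positivity)]
  ring

end
end

section
/- (Hilbert–Schmidt measure in region I.) For all real α, β with α ≥ 1/4 + β/8, every separable density matrix σ on ℂ³ ⊗ ℂ³ satisfies ‖σ − ρ_{α,β,0}‖ ≥ (2√2/3)·(α − 1/4 − β/8); in particular, if α > 1/4 + β/8 then ρ_{α,β,0} is not separable. -/
open Matrix Complex
open scoped Matrix Kronecker ComplexOrder

noncomputable section

/-! The witness `W = P₀₀ - 𝟙/9` pairs with a product state `A ⊗ B` to `Tr(AᵀB)/3 - 1/9`,
and `|Tr(AᵀB)| ≤ ‖A‖‖B‖ ≤ 1` for density matrices, so `Re⟨W, σ⟩ ≤ 2/9` on all separable `σ`.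
Since `⟨W, ρ_{α,β,0}⟩ = (8α - β)/9`, Cauchy–Schwarz gives `(8α - β - 2)/9 ≤ ‖W‖‖σ - ρ‖`,
and `‖W‖ = 2√2/3`. -/

open scoped ComplexConjugate InnerProductSpace

section HilbertSchmidt

variable {n : Type*} [Fintype n]

def hsVec (A : Matrix n n ℂ) : EuclideanSpace ℂ (n × n) := WithLp.toLp 2 fun x => A x.1 x.2

lemma hsInner_eq_sum (A B : Matrix n n ℂ) :
    hsInner A B = ∑ x : n × n, conj (A x.1 x.2) * B x.1 x.2 := by
  rw [hsInner, Matrix.trace, Fintype.sum_prod_type, Finset.sum_comm]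
  simp [Matrix.mul_apply]

lemma hsInner_eq_inner (A B : Matrix n n ℂ) : hsInner A B = ⟪hsVec A, hsVec B⟫_ℂ := by
  simp [hsInner_eq_sum, hsVec, PiLp.inner_apply, mul_comm]

lemma hsNorm_eq_norm (A : Matrix n n ℂ) : hsNorm A = ‖hsVec A‖ := by
  rw [hsNorm, norm_eq_sqrt_re_inner (𝕜 := ℂ), ← hsInner_eq_inner]
  rfl

lemma hsNorm_sq (A : Matrix n n ℂ) :
    hsNorm A ^ 2 = ∑ x : n × n, Complex.normSq (A x.1 x.2) := by
  rw [hsNorm_eq_norm, EuclideanSpace.norm_sq_eq]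
  simp [hsVec, Complex.normSq_eq_norm_sq]

lemma re_hsInner_le_hsNorm_mul_hsNorm (A B : Matrix n n ℂ) :
    (hsInner A B).re ≤ hsNorm A * hsNorm B := by
  rw [hsInner_eq_inner, hsNorm_eq_norm, hsNorm_eq_norm]
  exact re_inner_le_norm (𝕜 := ℂ) _ _

lemma re_hsInner_sub_le_hsNorm_mul_hsNorm (W ρ σ : Matrix n n ℂ) :
    (hsInner W ρ).re - (hsInner W σ).re ≤ hsNorm W * hsNorm (σ - ρ) := by
  rw [hsInner_eq_inner, hsInner_eq_inner, hsNorm_eq_norm, hsNorm_eq_norm, ← Complex.sub_re,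
    ← inner_sub_right]
  change _ ≤ ‖hsVec W‖ * ‖hsVec σ - hsVec ρ‖
  rw [norm_sub_rev]
  exact re_inner_le_norm (𝕜 := ℂ) _ _

lemma hsInner_add_right (A B C : Matrix n n ℂ) :
    hsInner A (B + C) = hsInner A B + hsInner A C := by
  simp [hsInner, Matrix.mul_add]

lemma hsInner_sub_right (A B C : Matrix n n ℂ) :
    hsInner A (B - C) = hsInner A B - hsInner A C := by
  simp [hsInner, Matrix.mul_sub]

lemma hsInner_smul_right (A B : Matrix n n ℂ) (c : ℂ) :
    hsInner A (c • B) = c * hsInner A B := by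
  simp [hsInner]

lemma hsInner_sum_right {ι : Type*} (s : Finset ι) (A : Matrix n n ℂ)
    (B : ι → Matrix n n ℂ) :
    hsInner A (∑ k ∈ s, B k) = ∑ k ∈ s, hsInner A (B k) := by
  simp [hsInner, Matrix.mul_sum]

end HilbertSchmidt

lemma Matrix.PosSemidef.normSq_apply_le {n : Type*} {A : Matrix n n ℂ} (hA : A.PosSemidef)
    (i j : n) : Complex.normSq (A i j) ≤ (A i i).re * (A j j).re := by
  have hdet := (hA.submatrix ![i, j]).det_nonneg
  have hji : A j i = conj (A i j) := by simpa using (hA.1.apply j i).symm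
  have hii : (A i i).im = 0 := by
    simpa using (congrArg Complex.im (hA.1.coe_re_apply_self i)).symm
  rw [Matrix.det_fin_two, Complex.nonneg_iff] at hdet
  simp only [Matrix.submatrix_apply, Matrix.cons_val_zero, Matrix.cons_val_one, hji,
    Complex.mul_conj] at hdet
  simpa [Complex.mul_re, hii] using hdet.1

section Density

variable {n : Type*} [Fintype n] [DecidableEq n]

lemma IsDensityMatrix.hsNorm_le_one {A : Matrix n n ℂ} (hA : IsDensityMatrix A) :
    hsNorm A ≤ 1 := by
  obtain ⟨-, hpsd, htr⟩ := hA
  have hre : ∑ i, (A i i).re = 1 := by simpa [Matrix.trace] using congrArg Complex.re htr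
  have hsq : hsNorm A ^ 2 ≤ 1 :=
    calc hsNorm A ^ 2 = ∑ x : n × n, Complex.normSq (A x.1 x.2) := hsNorm_sq A
      _ ≤ ∑ x : n × n, (A x.1 x.1).re * (A x.2 x.2).re :=
        Finset.sum_le_sum fun x _ => hpsd.normSq_apply_le x.1 x.2
      _ = 1 := by simp only [Fintype.sum_prod_type]; rw [← Finset.sum_mul_sum, hre, one_mul]
  exact (pow_le_one_iff_of_nonneg (Real.sqrt_nonneg _) two_ne_zero).mp hsq

lemma IsDensityMatrix.transpose {A : Matrix n n ℂ} (hA : IsDensityMatrix A) :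
    IsDensityMatrix Aᵀ :=
  ⟨hA.1.transpose, hA.2.1.transpose, by rw [Matrix.trace_transpose, hA.2.2]⟩

end Density

lemma re_hsInner_le_of_isSepState {d : ℕ}
    {W : Matrix (Fin d × Fin d) (Fin d × Fin d) ℂ} {c : ℝ}
    (hW : ∀ A B : Matrix (Fin d) (Fin d) ℂ, IsDensityMatrix A → IsDensityMatrix B →
      (hsInner W (A ⊗ₖ B)).re ≤ c)
    {σ : Matrix (Fin d × Fin d) (Fin d × Fin d) ℂ} (hσ : IsSepState σ) :
    (hsInner W σ).re ≤ c := by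
  obtain ⟨K, p, ρ₁, ρ₂, hp0, hp1, hρ₁, hρ₂, rfl⟩ := hσ
  calc (hsInner W (∑ k, (p k : ℂ) • (ρ₁ k ⊗ₖ ρ₂ k))).re
      = ∑ k, p k * (hsInner W (ρ₁ k ⊗ₖ ρ₂ k)).re := by
        simp only [hsInner_sum_right, hsInner_smul_right, Complex.re_sum, Complex.re_ofReal_mul]
    _ ≤ ∑ k, p k * c := Finset.sum_le_sum fun k _ =>
        mul_le_mul_of_nonneg_left (hW _ _ (hρ₁ k) (hρ₂ k)) (hp0 k)
    _ = c := by rw [← Finset.sum_mul, hp1, one_mul]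

lemma sub_le_hsNorm_mul_hsNorm_of_isSepState {d : ℕ}
    {W : Matrix (Fin d × Fin d) (Fin d × Fin d) ℂ} {c : ℝ}
    (hW : ∀ A B : Matrix (Fin d) (Fin d) ℂ, IsDensityMatrix A → IsDensityMatrix B →
      (hsInner W (A ⊗ₖ B)).re ≤ c)
    (ρ : Matrix (Fin d × Fin d) (Fin d × Fin d) ℂ)
    {σ : Matrix (Fin d × Fin d) (Fin d × Fin d) ℂ}
    (hσ : IsSepState σ) :
    (hsInner W ρ).re - c ≤ hsNorm W * hsNorm (σ - ρ) :=
  (sub_le_sub_left (re_hsInner_le_of_isSepState hW hσ) _).trans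
    (re_hsInner_sub_le_hsNorm_mul_hsNorm W ρ σ)

lemma norm_weyl_apply {d : ℕ} (n m k l : Fin d) :
    ‖weyl d n m k l‖ = if l = k + m then 1 else 0 := by
  rw [weyl, Matrix.of_apply]
  split_ifs
  · rw [Complex.norm_exp]
    simp
  · simp

lemma weyl_zero_zero (d : ℕ) [NeZero d] : weyl d 0 0 = 1 := by
  ext k l
  simp [weyl, Matrix.one_apply, eq_comm]

lemma trace_weyl_of_ne_zero {d : ℕ} [NeZero d] {n : Fin d} (hn : n ≠ 0) (m : Fin d) :
    (weyl d n m).trace = 0 := by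
  have hω := Complex.isPrimitiveRoot_exp d (NeZero.ne d)
  set ζ := Complex.exp (2 * Real.pi * Complex.I / d) ^ n.val with hζ
  have hζ1 : ζ ≠ 1 := hω.pow_ne_one_of_pos_of_lt (Fin.val_ne_zero_iff.mpr hn) n.isLt
  have hζd : ζ ^ d = 1 := by rw [hζ, pow_right_comm, hω.pow_eq_one, one_pow]
  have hentry (k : Fin d) :
      Complex.exp (2 * Real.pi * Complex.I * k.val * n.val / d) = ζ ^ k.val := by
    rw [hζ, ← pow_mul, ← Complex.exp_nat_mul]
    congr 1
    push_cast
    field_simp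
  by_cases hm : m = 0
  · subst hm
    simp only [Matrix.trace, Matrix.diag, weyl, Matrix.of_apply, add_zero, if_true, hentry]
    rw [Fin.sum_univ_eq_sum_range (fun k => ζ ^ k), geom_sum_eq hζ1, hζd, sub_self, zero_div]
  · simp [Matrix.trace, weyl, hm]

lemma kronecker_one_mulVec_phiPlus3 (U : Matrix (Fin 3) (Fin 3) ℂ) (p : Fin 3 × Fin 3) :
    ((U ⊗ₖ (1 : Matrix (Fin 3) (Fin 3) ℂ)) *ᵥ phiPlus3) p =
      ((1 / Real.sqrt 3 : ℝ) : ℂ) * U p.1 p.2 := by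
  simp [Matrix.mulVec, dotProduct, phiPlus3, Fintype.sum_prod_type, Matrix.one_apply, mul_comm]

lemma bellP_apply (n m : Fin 3) (p q : Fin 3 × Fin 3) :
    bellP n m p q = 1 / 3 * (weyl 3 n m p.1 p.2 * conj (weyl 3 n m q.1 q.2)) := by
  rw [bellP, projPhiPlus3, Matrix.mul_vecMulVec, Matrix.vecMulVec_mul, ← Matrix.star_mulVec,
    Matrix.vecMulVec_apply, Pi.star_apply, kronecker_one_mulVec_phiPlus3,
    kronecker_one_mulVec_phiPlus3]
  have h3 : ((1 / Real.sqrt 3 : ℝ) : ℂ) * ((1 / Real.sqrt 3 : ℝ) : ℂ) = 1 / 3 := by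
    rw [← Complex.ofReal_mul, div_mul_div_comm, one_mul, Real.mul_self_sqrt (by norm_num)]
    norm_num
  simp only [star_mul', Complex.star_def, Complex.conj_ofReal]
  linear_combination (weyl 3 n m p.1 p.2 * conj (weyl 3 n m q.1 q.2)) * h3

lemma trace_bellP (n m : Fin 3) : (bellP n m).trace = 1 := by
  simp only [Matrix.trace, Matrix.diag, bellP_apply, Complex.mul_conj, Complex.normSq_eq_norm_sq,
    norm_weyl_apply, Fintype.sum_prod_type, ← Finset.mul_sum]
  simp [ite_pow, apply_ite Complex.ofReal, Finset.sum_ite_eq']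

lemma trace_rhoFam (α β γ : ℝ) : (rhoFam α β γ).trace = 1 := by
  simp only [rhoFam, Matrix.trace_add, Matrix.trace_smul, trace_bellP, Matrix.trace_one,
    Fintype.card_prod, Fintype.card_fin, smul_eq_mul]
  push_cast
  ring

lemma hsInner_bellP_zero_zero (X : Matrix (Fin 3 × Fin 3) (Fin 3 × Fin 3) ℂ) :
    hsInner (bellP 0 0) X = 1 / 3 * ∑ i, ∑ j, X (i, i) (j, j) := by
  simp [hsInner_eq_sum, bellP_apply, weyl_zero_zero, Matrix.one_apply, Fintype.sum_prod_type,
    Finset.mul_sum, apply_ite (starRingEnd ℂ), ite_mul, Finset.sum_ite_eq, map_ofNat]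

lemma hsInner_bellP_zero_zero_bellP (n m : Fin 3) :
    hsInner (bellP 0 0) (bellP n m) = (weyl 3 n m).trace * conj (weyl 3 n m).trace / 9 := by
  simp only [hsInner_bellP_zero_zero, bellP_apply, Matrix.trace, Matrix.diag_apply, map_sum,
    Finset.mul_sum, Finset.sum_mul, Finset.sum_div]
  rw [Finset.sum_comm]
  ring_nf

lemma hsInner_bellP_zero_zero_kronecker (A B : Matrix (Fin 3) (Fin 3) ℂ) :
    hsInner (bellP 0 0) (A ⊗ₖ B) = 1 / 3 * (Aᵀ * B).trace := by
  simp only [hsInner_bellP_zero_zero, Matrix.kroneckerMap_apply, Matrix.trace, Matrix.diag_apply,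
    Matrix.mul_apply, Matrix.transpose_apply]
  rw [Finset.sum_comm]

def bellWitness : Matrix (Fin 3 × Fin 3) (Fin 3 × Fin 3) ℂ := bellP 0 0 - (1 / 9 : ℂ) • 1

lemma hsInner_bellWitness (X : Matrix (Fin 3 × Fin 3) (Fin 3 × Fin 3) ℂ) :
    hsInner bellWitness X = hsInner (bellP 0 0) X - X.trace / 9 := by
  rw [bellWitness, hsInner, hsInner, Matrix.conjTranspose_sub, Matrix.conjTranspose_smul,
    Matrix.conjTranspose_one, Matrix.sub_mul, Matrix.smul_mul, one_mul, Matrix.trace_sub,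
    Matrix.trace_smul, smul_eq_mul, star_div₀, star_one, star_ofNat, one_div_mul_eq_div]

lemma trace_bellWitness : bellWitness.trace = 0 := by
  rw [bellWitness, Matrix.trace_sub, Matrix.trace_smul, trace_bellP, Matrix.trace_one]
  norm_num

lemma hsInner_bellP_zero_zero_self : hsInner (bellP 0 0) (bellP 0 0) = 1 := by
  rw [hsInner_bellP_zero_zero_bellP, weyl_zero_zero, Matrix.trace_one]
  norm_num [map_ofNat]

lemma hsInner_bellP_zero_zero_one : hsInner (bellP 0 0) 1 = 1 := by
  simp [hsInner_bellP_zero_zero, Matrix.one_apply]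

lemma hsInner_bellWitness_rhoFam (α β : ℝ) :
    hsInner bellWitness (rhoFam α β 0) = ((8 * α - β) / 9 : ℝ) := by
  have hP (n : Fin 3) (hn : n ≠ 0) : hsInner (bellP 0 0) (bellP n 0) = 0 := by
    simp [hsInner_bellP_zero_zero_bellP, trace_weyl_of_ne_zero hn]
  rw [hsInner_bellWitness, trace_rhoFam]
  simp only [rhoFam, hsInner_add_right, hsInner_smul_right, hP 1 (by decide), hP 2 (by decide),
    hsInner_bellP_zero_zero_self, hsInner_bellP_zero_zero_one]
  push_cast
  ring

lemma hsNorm_bellWitness : hsNorm bellWitness = 2 * Real.sqrt 2 / 3 := by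
  have hself : hsInner bellWitness bellWitness = (8 / 9 : ℝ) := by
    rw [hsInner_bellWitness, trace_bellWitness, bellWitness, hsInner_sub_right,
      hsInner_smul_right, hsInner_bellP_zero_zero_self, hsInner_bellP_zero_zero_one]
    norm_num
  rw [hsNorm, ← hsInner, hself, Complex.ofReal_re,
    Real.sqrt_eq_iff_mul_self_eq_of_pos (by positivity)]
  nlinarith [Real.mul_self_sqrt (show (0 : ℝ) ≤ 2 by norm_num)]

lemma re_hsInner_bellWitness_kronecker_le {A B : Matrix (Fin 3) (Fin 3) ℂ}
    (hA : IsDensityMatrix A) (hB : IsDensityMatrix B) :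
    (hsInner bellWitness (A ⊗ₖ B)).re ≤ 2 / 9 := by
  have hAt : (Aᵀ * B).trace = hsInner Aᵀ B := by rw [hsInner, hA.transpose.1.eq]
  have hCS : (hsInner Aᵀ B).re ≤ 1 :=
    calc (hsInner Aᵀ B).re ≤ hsNorm Aᵀ * hsNorm B := re_hsInner_le_hsNorm_mul_hsNorm _ _
      _ ≤ 1 * 1 := mul_le_mul hA.transpose.hsNorm_le_one hB.hsNorm_le_one
          (Real.sqrt_nonneg _) zero_le_one
      _ = 1 := one_mul 1
  rw [hsInner_bellWitness, hsInner_bellP_zero_zero_kronecker, Matrix.trace_kronecker, hA.2.2,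
    hB.2.2, hAt]
  norm_num [hCS]

theorem stmt11_general (α β : ℝ) :
    (∀ σ : Matrix (Fin 3 × Fin 3) (Fin 3 × Fin 3) ℂ, IsSepState σ →
      2 * Real.sqrt 2 / 3 * (α - 1 / 4 - β / 8) ≤ hsNorm (σ - rhoFam α β 0)) ∧
    (1 / 4 + β / 8 < α → ¬ IsSepState (rhoFam α β 0)) := by
  set c := 2 * Real.sqrt 2 / 3
  have hc0 : 0 < c := by positivity
  have hc : c * c = 8 / 9 := by
    linear_combination 4 / 9 * Real.mul_self_sqrt (show (0 : ℝ) ≤ 2 by norm_num)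
  have hdist (σ : Matrix (Fin 3 × Fin 3) (Fin 3 × Fin 3) ℂ) (hσ : IsSepState σ) :
      c * (α - 1 / 4 - β / 8) ≤ hsNorm (σ - rhoFam α β 0) := by
    have h := sub_le_hsNorm_mul_hsNorm_of_isSepState
      (fun _ _ hA hB => re_hsInner_bellWitness_kronecker_le hA hB) (rhoFam α β 0) hσ
    rw [hsInner_bellWitness_rhoFam, Complex.ofReal_re, hsNorm_bellWitness] at h
    calc c * (α - 1 / 4 - β / 8) = 9 / 8 * c * ((8 * α - β) / 9 - 2 / 9) := by ring
      _ ≤ 9 / 8 * c * (c * hsNorm (σ - rhoFam α β 0)) := by gcongr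
      _ = hsNorm (σ - rhoFam α β 0) := by
        linear_combination 9 / 8 * hsNorm (σ - rhoFam α β 0) * hc
  refine ⟨hdist, fun hα hρ => ?_⟩
  have h := hdist _ hρ
  simp only [sub_self, hsNorm, Matrix.conjTranspose_zero, Matrix.mul_zero, Matrix.trace_zero,
    Complex.zero_re, Real.sqrt_zero] at h
  exact h.not_gt (mul_pos hc0 (by linarith))

/-- Hilbert–Schmidt measure in region I: every separable state is at distance at least
(2√2/3)(α − 1/4 − β/8) from ρ_{α,β,0}; strict inequality forces entanglement. -/
theorem stmt11 (α β : ℝ) (h : 1 / 4 + β / 8 ≤ α) :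
    (∀ σ : Matrix (Fin 3 × Fin 3) (Fin 3 × Fin 3) ℂ, IsSepState σ →
      2 * Real.sqrt 2 / 3 * (α - 1 / 4 - β / 8) ≤ hsNorm (σ - rhoFam α β 0)) ∧
    (1 / 4 + β / 8 < α → ¬ IsSepState (rhoFam α β 0)) :=
  stmt11_general α β
end
end
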